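/- Let N ≥ 1 and r ≥ 1 be integers, t_min > 0, β > 0, and 0 ≤ τ_est with t_min ≤ D − τ_est ≤ D. Let (T_{j,k}), for j = 1, ..., N and k = 1, ..., r+1, be mutually independent Pareto(t_min, β) random variables. Say task j fails if T_{j,1} > D and T_{j,k} > D − τ_est for every k = 2, ..., r+1. Then the probability that no task fails equals (1 − t_min^{β·(r+1)}/(D^β · (D − τ_est)^{β·r}))^N. -/

import Mathlib

open MeasureTheory ProbabilityTheory Set

/-!
Task `j` fails exactly when every attempt `T j k` exceeds its own threshold `c k` (`D` for the
original attempt, `D - τest` for the extra ones). Independence of the whole array makes the rows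
`(T j ·)` independent random vectors: the joint law of the array is a product measure, and
currying it gives the product of the row laws. Hence `P(no task fails) = ∏ⱼ (1 - P(task j fails))`
with `P(task j fails) = ∏ₖ (tmin / c k) ^ β`.
-/

/-- A real random variable `X` is Pareto(`tmin`, `β`): `P(X > t) = (tmin/t)^β` for `t ≥ tmin`
and `P(X > t) = 1` for `t < tmin`. -/
def IsPareto {Ω : Type*} [MeasurableSpace Ω] (μ : Measure Ω) (X : Ω → ℝ)
    (tmin β : ℝ) : Prop :=
  Measurable X ∧
    (∀ t : ℝ, tmin ≤ t → μ {ω | t < X ω} = ENNReal.ofReal ((tmin / t) ^ β)) ∧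
    (∀ t : ℝ, t < tmin → μ {ω | t < X ω} = 1)

namespace ProbabilityTheory

variable {Ω ι κ 𝓧 : Type*} [MeasurableSpace Ω] [MeasurableSpace 𝓧] {μ : Measure Ω}
  [IsProbabilityMeasure μ] {X : ι → κ → Ω → 𝓧}

theorem iIndepFun.curry (mX : ∀ i j, Measurable (X i j))
    (h : iIndepFun (fun p : ι × κ ↦ X p.1 p.2) μ) :
    iIndepFun (fun i ω j ↦ X i j ω) μ := by
  have hrow (i : ι) : μ.map (fun ω j ↦ X i j ω) = Measure.infinitePi fun j ↦ μ.map (X i j) :=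
    (h.precomp (Prod.mk_right_injective i)).map_fun_eq_infinitePi_map (mX i)
  rw [iIndepFun_iff_map_fun_eq_infinitePi_map fun i ↦ measurable_pi_lambda _ (mX i)]
  have hpair : μ.map (fun ω (p : ι × κ) ↦ X p.1 p.2 ω)
      = Measure.infinitePi fun p : ι × κ ↦ μ.map (X p.1 p.2) :=
    h.map_fun_eq_infinitePi_map fun p ↦ mX p.1 p.2
  calc μ.map (fun ω i j ↦ X i j ω)
      = (μ.map fun ω p ↦ X p.1 p.2 ω).map (MeasurableEquiv.curry ι κ 𝓧) :=
        (Measure.map_map (MeasurableEquiv.curry ι κ 𝓧).measurable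
          (measurable_pi_lambda _ fun p ↦ mX p.1 p.2)).symm
    _ = Measure.infinitePi fun i ↦ Measure.infinitePi fun j ↦ μ.map (X i j) := by
        have (i : ι) (j : κ) : IsProbabilityMeasure (μ.map (X i j)) :=
          Measure.isProbabilityMeasure_map (mX i j).aemeasurable
        rw [hpair]
        exact Measure.infinitePi_map_curry fun i j ↦ μ.map (X i j)
    _ = Measure.infinitePi fun i ↦ μ.map (fun ω j ↦ X i j ω) := by simp only [hrow]

theorem measure_forall_not_forall_mem [Fintype ι] [Fintype κ] (mX : ∀ i j, Measurable (X i j))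
    (h : iIndepFun (fun p : ι × κ ↦ X p.1 p.2) μ) {A : ι → κ → Set 𝓧}
    (hA : ∀ i j, MeasurableSet (A i j)) :
    μ {ω | ∀ i, ¬ ∀ j, X i j ω ∈ A i j} = ∏ i, (1 - ∏ j, μ (X i j ⁻¹' A i j)) := by
  classical
  have hrow (i : ι) : μ ((fun ω j ↦ X i j ω) ⁻¹' univ.pi (A i)) = ∏ j, μ (X i j ⁻¹' A i j) := by
    simpa [Set.preimage, Set.ofPred_forall] using
      (h.precomp (Prod.mk_right_injective i)).measure_inter_preimage_eq_mul
        Finset.univ (fun j _ ↦ hA i j)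
  have hpi (i : ι) : MeasurableSet (univ.pi (A i)) := .univ_pi (hA i)
  have hevent : {ω | ∀ i, ¬ ∀ j, X i j ω ∈ A i j}
      = ⋂ i ∈ (Finset.univ : Finset ι), (fun ω j ↦ X i j ω) ⁻¹' (univ.pi (A i))ᶜ := by
    ext ω; simp
  rw [hevent, (h.curry mX).measure_inter_preimage_eq_mul _ fun i _ ↦ (hpi i).compl]
  refine Finset.prod_congr rfl fun i _ ↦ ?_
  rw [preimage_compl, prob_compl_eq_one_sub ((measurable_pi_lambda _ (mX i)) (hpi i)), hrow]

end ProbabilityTheory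

theorem Real.div_rpow_mul_div_rpow_pow {t a b β : ℝ} (ht : 0 < t) (ha : 0 ≤ a) (hb : 0 ≤ b)
    (n : ℕ) : (t / a) ^ β * ((t / b) ^ β) ^ n = t ^ (β * (n + 1)) / (a ^ β * b ^ (β * n)) := by
  rw [← Real.rpow_natCast _ n, ← Real.rpow_mul (div_nonneg ht.le hb), Real.div_rpow ht.le ha,
    Real.div_rpow ht.le hb, div_mul_div_comm, ← Real.rpow_add ht, mul_add_one, add_comm (β * n)]

theorem pocd_speculative_restart_general
    {Ω : Type*} [MeasurableSpace Ω] (μ : Measure Ω) [IsProbabilityMeasure μ]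
    (N r : ℕ) (tmin β D τest : ℝ)
    (htmin : 0 < tmin) (hβ : 0 < β)
    (h1 : tmin ≤ D - τest) (h2 : D - τest ≤ D)
    (T : Fin N → Fin (r + 1) → Ω → ℝ)
    (hindep : iIndepFun
      (fun p : Fin N × Fin (r + 1) => T p.1 p.2) μ)
    (hpareto : ∀ j k, IsPareto μ (T j k) tmin β) :
    μ {ω | ∀ j, ¬ (D < T j 0 ω ∧ ∀ k, k ≠ 0 → D - τest < T j k ω)}
      = ENNReal.ofReal
          ((1 - tmin ^ (β * (r + 1 : ℝ)) / (D ^ β * (D - τest) ^ (β * (r : ℝ)))) ^ N) := by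
  set c : Fin (r + 1) → ℝ := Fin.cons D fun _ ↦ D - τest
  have hc : ∀ k, tmin ≤ c k := Fin.cases (h1.trans h2) fun _ ↦ h1
  have hbase : ∀ k, 0 ≤ tmin / c k := fun k ↦ div_nonneg htmin.le (htmin.le.trans (hc k))
  have htail_nonneg : ∀ k, 0 ≤ (tmin / c k) ^ β := fun k ↦ Real.rpow_nonneg (hbase k) β
  have hevent : {ω | ∀ j, ¬ (D < T j 0 ω ∧ ∀ k, k ≠ 0 → D - τest < T j k ω)}
      = {ω | ∀ j, ¬ ∀ k, T j k ω ∈ Ioi (c k)} := by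
    ext ω
    simp [Fin.forall_fin_succ, c]
  have hfail (j : Fin N) :
      ∏ k, μ (T j k ⁻¹' Ioi (c k)) = ENNReal.ofReal (∏ k, (tmin / c k) ^ β) := by
    rw [ENNReal.ofReal_prod_of_nonneg fun k _ ↦ htail_nonneg k]
    exact Finset.prod_congr rfl fun k _ ↦ (hpareto j k).2.1 _ (hc k)
  have hq_le : ∏ k, (tmin / c k) ^ β ≤ 1 := Finset.prod_le_one (fun k _ ↦ htail_nonneg k)
    fun k _ ↦ Real.rpow_le_one (hbase k) (div_le_one_of_le₀ (hc k) (htmin.le.trans (hc k))) hβ.le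
  have hq : ∏ k, (tmin / c k) ^ β
      = tmin ^ (β * (r + 1 : ℝ)) / (D ^ β * (D - τest) ^ (β * (r : ℝ))) := by
    simpa [Fin.prod_univ_succ, c] using Real.div_rpow_mul_div_rpow_pow (β := β) htmin
      (htmin.le.trans (h1.trans h2)) (htmin.le.trans h1) r
  rw [hevent, measure_forall_not_forall_mem (fun j k ↦ (hpareto j k).1) hindep
      fun _ _ ↦ measurableSet_Ioi]
  simp only [hfail, Finset.prod_const, Finset.card_univ, Fintype.card_fin]
  rw [← ENNReal.ofReal_one, ← ENNReal.ofReal_sub _ (Finset.prod_nonneg fun k _ ↦ htail_nonneg k),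
    ← ENNReal.ofReal_pow (sub_nonneg.2 hq_le), hq]

/-- paper's Theorem 3, PoCD of Speculative-Restart: task `j` fails iff its
original attempt `T j 0` exceeds `D` and each of the `r` extra attempts `T j k` (`k ≠ 0`)
exceeds `D − τ_est`; the probability that no task fails is
`(1 − tmin^{β(r+1)}/(D^β (D−τ_est)^{βr}))^N`. -/
theorem pocd_speculative_restart
    {Ω : Type*} [MeasurableSpace Ω] (μ : Measure Ω) [IsProbabilityMeasure μ]
    (N r : ℕ) (hN : 1 ≤ N) (hr : 1 ≤ r) (tmin β D τest : ℝ)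
    (htmin : 0 < tmin) (hβ : 0 < β) (hτest : 0 ≤ τest)
    (h1 : tmin ≤ D - τest) (h2 : D - τest ≤ D)
    (T : Fin N → Fin (r + 1) → Ω → ℝ)
    (hindep : iIndepFun
      (fun p : Fin N × Fin (r + 1) => T p.1 p.2) μ)
    (hpareto : ∀ j k, IsPareto μ (T j k) tmin β) :
    μ {ω | ∀ j, ¬ (D < T j 0 ω ∧ ∀ k, k ≠ 0 → D - τest < T j k ω)}
      = ENNReal.ofReal
          ((1 - tmin ^ (β * (r + 1 : ℝ)) / (D ^ β * (D - τest) ^ (β * (r : ℝ)))) ^ N) :=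
  pocd_speculative_restart_general μ N r tmin β D τest htmin hβ h1 h2 T hindep hpareto
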